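/- arXiv:2309.15360 — 2 statements merged into one kernel-verified Lean document; each statement's English description precedes it below -/
import Mathlib

section
/- Let G_w denote the normalized extremal quasimodular form of weight w and depth 1 on SL₂(ℤ), defined by G₀ = 1 and the recursions G_{w+6} = ((w+6)/(72(w+1)(w+5))) K^up_w(G_w), where K^up_w = E₄∂_{w-1} - ((w+1)/12)E₆. Then for w ≡ 0 (mod 6), G_{w+12} = -((w+6)(w+12)/(432(w+7)(w+11))) (E₆ G_{w+6} - Δ G_w). -/
/-!
Ramanujan's differential equations `12 D E₂ = E₂² - E₄`, `3 D E₄ = E₂E₄ - E₆` and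
`2 D E₆ = E₂E₆ - E₄²` turn the operator identities
`L_{w+6} ∘ K^up_w = E₄ ∂_{w+3} ∘ L_w - ((w+9)/12) E₆ L_w` and
`K^up_{w+6} ∘ K^up_w = E₄² L_w - ((w+6)/6) E₆ K^up_w + 12(w+1)(w+5)Δ` into polynomial identities.
By the first, `L_w G_w = 0` propagates from `G₀ = 1` to every `G_w`; the second, applied to `G_w`
with `K^up_w G_w ∝ G_{w+6}`, is the recursion.

On `q`-expansions Ramanujan's equations are the classical formulas for the convolutions
`∑ σ_i(k) σ_j(n - k)`, proved by Liouville's method: such a convolution is the sum of `a^i b^j` over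
the positive solutions of `ax + by = n`, and comparing two decompositions of these sums, one by
the involution `(a, b, x, y) ↦ (b, a, y, x)` and one by the bijection
`(a, b, x, y) ↦ (a, a + b, x - y, y)` from `{y < x}` onto `{a < b}`, leaves only divisor sums of
polynomials, evaluated by Faulhaber's formulas.
-/

open PowerSeries

/-- The operator `D = q d/dq` acting on `q`-expansions (formal power series in `q`). -/
noncomputable def Dq (f : PowerSeries ℚ) : PowerSeries ℚ :=
  PowerSeries.mk fun n => (n : ℚ) * PowerSeries.coeff n f

/-- The normalized Eisenstein series `E₂ = 1 - 24 ∑ σ₁(n) qⁿ`. -/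
noncomputable def E2 : PowerSeries ℚ :=
  PowerSeries.mk fun n => if n = 0 then 1 else -24 * ∑ d ∈ n.divisors, (d : ℚ)

/-- The normalized Eisenstein series `E₄ = 1 + 240 ∑ σ₃(n) qⁿ`. -/
noncomputable def E4 : PowerSeries ℚ :=
  PowerSeries.mk fun n => if n = 0 then 1 else 240 * ∑ d ∈ n.divisors, (d : ℚ) ^ 3

/-- The normalized Eisenstein series `E₆ = 1 - 504 ∑ σ₅(n) qⁿ`. -/
noncomputable def E6 : PowerSeries ℚ :=
  PowerSeries.mk fun n => if n = 0 then 1 else -504 * ∑ d ∈ n.divisors, (d : ℚ) ^ 5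

/-- The discriminant `Δ = (E₄³ - E₆²)/1728`. -/
noncomputable def Δmf : PowerSeries ℚ := PowerSeries.C (R := ℚ) (1 / 1728) * (E4 ^ 3 - E6 ^ 2)

/-- The Serre derivative `∂ₖ = D - (k/12)E₂`. -/
noncomputable def serreD (k : ℚ) (f : PowerSeries ℚ) : PowerSeries ℚ :=
  Dq f - PowerSeries.C (R := ℚ) (k / 12) * E2 * f

/-- `K^up_w = E₄ ∂_{w-1} - ((w+1)/12) E₆`. -/
noncomputable def Kup (w : ℚ) (f : PowerSeries ℚ) : PowerSeries ℚ :=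
  E4 * serreD (w - 1) f - PowerSeries.C (R := ℚ) ((w + 1) / 12) * E6 * f

/-- `G n` is the normalized extremal quasimodular form of weight `6n` and depth 1,
defined by `G₀ = 1` and `G_{w+6} = ((w+6)/(72(w+1)(w+5))) K^up_w(G_w)` for `w = 6n`. -/
noncomputable def G : ℕ → PowerSeries ℚ
  | 0 => 1
  | n + 1 =>
      PowerSeries.C (R := ℚ) ((6 * (n : ℚ) + 6) / (72 * (6 * (n : ℚ) + 1) * (6 * (n : ℚ) + 5))) *
        Kup (6 * (n : ℚ)) (G n)

open Finset ArithmeticFunction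
open scoped ArithmeticFunction.sigma

theorem Finset.sum_eq_sum_filter_lt_add_sum_filter_gt_add_sum_filter_eq {α β M : Type*}
    [LinearOrder β] [AddCommMonoid M] (s : Finset α) (u v : α → β) (F : α → M) :
    ∑ p ∈ s, F p = ∑ p ∈ s.filter (fun p => u p < v p), F p
      + ∑ p ∈ s.filter (fun p => v p < u p), F p + ∑ p ∈ s.filter (fun p => u p = v p), F p := by
  rw [← sum_filter_add_sum_filter_not s (fun p => u p < v p), add_assoc,
    ← sum_filter_add_sum_filter_not (s.filter fun p => ¬u p < v p) (fun p => v p < u p),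
    filter_filter, filter_filter]
  congr 2 <;> refine sum_congr (filter_congr fun p _ => ?_) fun _ _ => rfl
  · exact ⟨And.right, fun h => ⟨h.not_gt, h⟩⟩
  · exact ⟨fun h => (not_lt.1 h.2).antisymm (not_lt.1 h.1), fun h => ⟨h.not_lt, h.symm.not_lt⟩⟩

theorem Finset.sum_filter_eq_sum_filter_comp_perm {α M : Type*} [AddCommMonoid M] {s : Finset α}
    (e : Equiv.Perm α) (he : ∀ p, e p ∈ s ↔ p ∈ s) (P : α → Prop) [DecidablePred P] (F : α → M) :
    ∑ p ∈ s.filter P, F p = ∑ p ∈ s.filter (fun p => P (e p)), F (e p) :=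
  (sum_equiv e (fun p => by simp only [mem_filter, he]) (fun _ _ => rfl)).symm

theorem PowerSeries.coeff_ofNat_mul {R : Type*} [Semiring R] (n k : ℕ) [k.AtLeastTwo]
    (f : PowerSeries R) : coeff n ((ofNat(k) : PowerSeries R) * f) = ofNat(k) * coeff n f := by
  rw [← map_ofNat (C (R := R)) k, coeff_C_mul]

section Liouville

/-- The quadruples `((a, b), (x, y))` of positive integers with `a * x + b * y = n`. -/
def mulAddSolutions (n : ℕ) : Finset ((ℕ × ℕ) × (ℕ × ℕ)) :=
  ((Icc 1 n ×ˢ Icc 1 n) ×ˢ (Icc 1 n ×ˢ Icc 1 n)).filter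
    (fun p => p.1.1 * p.2.1 + p.1.2 * p.2.2 = n)

def quadSwap : Equiv.Perm ((ℕ × ℕ) × (ℕ × ℕ)) := .prodCongr (.prodComm ℕ ℕ) (.prodComm ℕ ℕ)

def quadTranspose : Equiv.Perm ((ℕ × ℕ) × (ℕ × ℕ)) := .prodComm (ℕ × ℕ) (ℕ × ℕ)

variable {n : ℕ} {M : Type*}

theorem mem_mulAddSolutions {a b x y : ℕ} :
    ((a, b), (x, y)) ∈ mulAddSolutions n ↔ 0 < a ∧ 0 < b ∧ 0 < x ∧ 0 < y ∧ a * x + b * y = n := by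
  simp only [mulAddSolutions, mem_filter, mem_product, mem_Icc]
  constructor
  · rintro ⟨⟨⟨⟨ha, -⟩, hb, -⟩, ⟨hx, -⟩, hy, -⟩, h⟩
    exact ⟨ha, hb, hx, hy, h⟩
  · rintro ⟨ha, hb, hx, hy, rfl⟩
    have := Nat.le_mul_of_pos_right a hx
    have := Nat.le_mul_of_pos_left x ha
    have := Nat.le_mul_of_pos_right b hy
    have := Nat.le_mul_of_pos_left y hb
    exact ⟨⟨⟨⟨ha, by omega⟩, hb, by omega⟩, ⟨hx, by omega⟩, hy, by omega⟩, rfl⟩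

theorem quadSwap_mem_mulAddSolutions (p : (ℕ × ℕ) × (ℕ × ℕ)) :
    quadSwap p ∈ mulAddSolutions n ↔ p ∈ mulAddSolutions n := by
  obtain ⟨⟨a, b⟩, x, y⟩ := p
  simp only [quadSwap, Equiv.prodCongr_apply, Equiv.prodComm_apply, Prod.map, Prod.swap,
    mem_mulAddSolutions]
  omega

theorem quadTranspose_mem_mulAddSolutions (p : (ℕ × ℕ) × (ℕ × ℕ)) :
    quadTranspose p ∈ mulAddSolutions n ↔ p ∈ mulAddSolutions n := by
  obtain ⟨⟨a, b⟩, x, y⟩ := p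
  simp only [quadTranspose, Equiv.prodComm_apply, Prod.swap, mem_mulAddSolutions, mul_comm x a,
    mul_comm y b]
  tauto

theorem sum_filter_mulAddSolutions_fst_lt [AddCommMonoid M] (F : (ℕ × ℕ) × (ℕ × ℕ) → M) :
    ∑ p ∈ (mulAddSolutions n).filter (fun p => p.1.1 < p.1.2), F p
      = ∑ p ∈ (mulAddSolutions n).filter (fun p => p.2.2 < p.2.1),
          F ((p.1.1, p.1.1 + p.1.2), (p.2.1 - p.2.2, p.2.2)) := by
  symm
  refine sum_nbij' (fun p => ((p.1.1, p.1.1 + p.1.2), (p.2.1 - p.2.2, p.2.2)))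
    (fun p => ((p.1.1, p.1.2 - p.1.1), (p.2.1 + p.2.2, p.2.2))) ?_ ?_ ?_ ?_ (fun _ _ => rfl) <;>
  rintro ⟨⟨a, b⟩, x, y⟩ hp <;>
  simp only [mem_filter, mem_mulAddSolutions, Prod.mk.injEq, true_and, and_true] at hp ⊢
  · have : a * (x - y) + a * y = a * x := by rw [← Nat.mul_add, Nat.sub_add_cancel hp.2.le]
    have : (a + b) * y = a * y + b * y := Nat.add_mul a b y
    omega
  · have : (b - a) * y + a * y = b * y := by rw [← Nat.add_mul, Nat.sub_add_cancel hp.2.le]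
    have : a * (x + y) = a * x + a * y := Nat.mul_add a x y
    omega
  · omega
  · omega

theorem sum_filter_mulAddSolutions_snd_eq [AddCommMonoid M] (F : (ℕ × ℕ) × (ℕ × ℕ) → M) :
    ∑ p ∈ (mulAddSolutions n).filter (fun p => p.2.1 = p.2.2), F p
      = ∑ d ∈ n.divisors, ∑ a ∈ Ioo 0 (n / d), F ((a, n / d - a), (d, d)) := by
  rw [sum_sigma']
  refine sum_nbij' (fun p => ⟨p.2.1, p.1.1⟩) (fun q => ((q.2, n / q.1 - q.2), (q.1, q.1)))
    ?_ ?_ ?_ (fun _ _ => rfl) ?_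
  · rintro ⟨⟨a, b⟩, x, y⟩ hp
    simp only [mem_filter, mem_mulAddSolutions] at hp
    obtain ⟨⟨ha, hb, hx, -, h⟩, rfl⟩ := hp
    have hn : n = x * (a + b) := by rw [← h]; ring
    simp only [mem_sigma, Nat.mem_divisors, mem_Ioo, hn, Nat.mul_div_cancel_left _ hx]
    exact ⟨⟨dvd_mul_right _ _, by positivity⟩, ha, by omega⟩
  · rintro ⟨d, a⟩ hq
    simp only [mem_sigma, Nat.mem_divisors, mem_Ioo] at hq
    obtain ⟨⟨⟨c, rfl⟩, hn⟩, ha, hac⟩ := hq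
    have hd : 0 < d := Nat.pos_of_ne_zero (by rintro rfl; simp at hn)
    rw [Nat.mul_div_cancel_left _ hd] at hac ⊢
    simp only [mem_filter, mem_mulAddSolutions, and_true]
    refine ⟨ha, by omega, hd, hd, ?_⟩
    rw [← Nat.add_mul, Nat.add_sub_cancel' hac.le, mul_comm]
  all_goals
    rintro ⟨⟨a, b⟩, x, y⟩ hp
    simp only [mem_filter, mem_mulAddSolutions] at hp
    obtain ⟨⟨-, -, hx, -, h⟩, rfl⟩ := hp
    have hn : n / x = a + b := by rw [← h, ← Nat.add_mul, Nat.mul_div_cancel _ hx]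
    simp [hn]

theorem sum_mulAddSolutions_eq_symm_add_diag [AddCommMonoid M] (h : ℕ → ℕ → M) :
    ∑ p ∈ mulAddSolutions n, h p.1.1 p.1.2
      = ∑ p ∈ (mulAddSolutions n).filter (fun p => p.2.2 < p.2.1), (h p.1.1 p.1.2 + h p.1.2 p.1.1)
        + ∑ d ∈ n.divisors, ∑ a ∈ Ioo 0 (n / d), h a (n / d - a) := by
  have hswap : ∑ p ∈ (mulAddSolutions n).filter (fun p => p.2.1 < p.2.2), h p.1.1 p.1.2
      = ∑ p ∈ (mulAddSolutions n).filter (fun p => p.2.2 < p.2.1), h p.1.2 p.1.1 :=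
    sum_filter_eq_sum_filter_comp_perm quadSwap quadSwap_mem_mulAddSolutions _ _
  rw [sum_eq_sum_filter_lt_add_sum_filter_gt_add_sum_filter_eq _ (fun p => p.2.1) (fun p => p.2.2),
    hswap, sum_filter_mulAddSolutions_snd_eq, sum_add_distrib]
  abel

theorem sum_mulAddSolutions_eq_shear_add_diag [AddCommMonoid M] (h : ℕ → ℕ → M) :
    ∑ p ∈ mulAddSolutions n, h p.1.1 p.1.2
      = ∑ p ∈ (mulAddSolutions n).filter (fun p => p.2.2 < p.2.1),
          (h p.1.1 (p.1.1 + p.1.2) + h (p.1.1 + p.1.2) p.1.1)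
        + ∑ d ∈ n.divisors, ∑ _a ∈ Ioo 0 (n / d), h d d := by
  have hswap : ∑ p ∈ (mulAddSolutions n).filter (fun p => p.1.2 < p.1.1), h p.1.1 p.1.2
      = ∑ p ∈ (mulAddSolutions n).filter (fun p => p.1.1 < p.1.2), h p.1.2 p.1.1 :=
    sum_filter_eq_sum_filter_comp_perm quadSwap quadSwap_mem_mulAddSolutions _ _
  have htranspose : ∑ p ∈ (mulAddSolutions n).filter (fun p => p.1.1 = p.1.2), h p.1.1 p.1.2
      = ∑ p ∈ (mulAddSolutions n).filter (fun p => p.2.1 = p.2.2), h p.2.1 p.2.2 :=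
    sum_filter_eq_sum_filter_comp_perm quadTranspose quadTranspose_mem_mulAddSolutions _ _
  rw [sum_eq_sum_filter_lt_add_sum_filter_gt_add_sum_filter_eq _ (fun p => p.1.1) (fun p => p.1.2),
    hswap, htranspose, sum_filter_mulAddSolutions_fst_lt, sum_filter_mulAddSolutions_fst_lt,
    sum_filter_mulAddSolutions_snd_eq, sum_add_distrib]

theorem sum_mulAddSolutions_liouville [AddCommGroup M] (f g : ℕ → ℕ → M)
    (hfg : ∀ a b, f a b + f b a - f (a + b) a - f a (a + b) = g a b + g b a) :
    ∑ p ∈ mulAddSolutions n, g p.1.1 p.1.2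
      = ∑ d ∈ n.divisors, ∑ a ∈ Ioo 0 (n / d), (f d d - f a (n / d - a) + g a (n / d - a)) := by
  -- comparing the two decompositions of `∑ f a b` isolates `∑_{y<x} (g a b + g b a)`
  have hf := sum_mulAddSolutions_eq_symm_add_diag (n := n) f
  rw [sum_mulAddSolutions_eq_shear_add_diag f] at hf
  simp only [sum_mulAddSolutions_eq_symm_add_diag g, ← hfg, sum_add_distrib, sum_sub_distrib]
    at hf ⊢
  linear_combination (norm := abel) -hf

theorem sum_mulAddSolutions_eq_sum_antidiagonal {R : Type*} [Semiring R] (g h : ℕ → R) :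
    ∑ q ∈ mulAddSolutions n, g q.1.1 * h q.1.2
      = ∑ p ∈ antidiagonal n, (∑ d ∈ p.1.divisors, g d) * ∑ e ∈ p.2.divisors, h e := by
  simp only [← Nat.sum_divisorsAntidiagonal (fun d _ => g d),
    ← Nat.sum_divisorsAntidiagonal (fun e _ => h e), sum_mul_sum, ← sum_product', sum_sigma']
  refine sum_nbij' (fun q => ⟨(q.1.1 * q.2.1, q.1.2 * q.2.2), ((q.1.1, q.2.1), (q.1.2, q.2.2))⟩)
    (fun s => ((s.2.1.1, s.2.2.1), (s.2.1.2, s.2.2.2))) ?_ ?_ (fun _ _ => rfl) ?_ (fun _ _ => rfl)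
  · rintro ⟨⟨a, b⟩, x, y⟩ hq
    obtain ⟨ha, hb, hx, hy, rfl⟩ := mem_mulAddSolutions.1 hq
    simp only [mem_sigma, HasAntidiagonal.mem_antidiagonal, mem_product,
      Nat.mem_divisorsAntidiagonal, true_and]
    constructor <;> positivity
  all_goals
    rintro ⟨⟨k, l⟩, ⟨a, x⟩, b, y⟩ hs
    simp only [mem_sigma, HasAntidiagonal.mem_antidiagonal, mem_product,
      Nat.mem_divisorsAntidiagonal] at hs
    obtain ⟨rfl, ⟨rfl, hk⟩, rfl, hl⟩ := hs
  · simp only [mem_mulAddSolutions, and_true]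
    refine ⟨?_, ?_, ?_, ?_⟩ <;> apply Nat.pos_of_ne_zero <;> rintro rfl <;> simp_all
  · rfl

end Liouville

section DivisorConvolutions

theorem cast_sigma_apply (k n : ℕ) : (σ k n : ℚ) = ∑ d ∈ n.divisors, (d : ℚ) ^ k := by
  simp [sigma_apply]

theorem cast_sigma_one_apply (n : ℕ) : (σ 1 n : ℚ) = ∑ d ∈ n.divisors, (d : ℚ) := by
  simp [sigma_apply]

theorem sum_divisors_sum_Ioo_pow (k n : ℕ) :
    ∑ d ∈ n.divisors, ∑ _a ∈ Ioo 0 (n / d), (d : ℚ) ^ (k + 1) = n * σ k n - σ (k + 1) n := by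
  rw [cast_sigma_apply, cast_sigma_apply, mul_sum, ← sum_sub_distrib]
  refine sum_congr rfl fun d hd => ?_
  obtain ⟨⟨c, rfl⟩, hn⟩ := Nat.mem_divisors.1 hd
  have hd : 0 < d := Nat.pos_of_ne_zero (by rintro rfl; simp at hn)
  have hc : 0 < c := Nat.pos_of_ne_zero (by rintro rfl; simp at hn)
  rw [sum_const, Nat.card_Ioo, nsmul_eq_mul, Nat.mul_div_cancel_left _ hd, Nat.sub_zero,
    Nat.cast_sub hc, Nat.cast_mul]
  ring

theorem sum_range_cast (m : ℕ) : ∑ a ∈ range m, (a : ℚ) = m * (m - 1) / 2 := by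
  induction m with
  | zero => simp
  | succ m ih => rw [sum_range_succ, ih]; push_cast; ring

theorem sum_range_cast_pow_two (m : ℕ) :
    ∑ a ∈ range m, (a : ℚ) ^ 2 = m * (m - 1) * (2 * m - 1) / 6 := by
  induction m with
  | zero => simp
  | succ m ih => rw [sum_range_succ, ih]; push_cast; ring

theorem sum_range_cast_pow_three (m : ℕ) :
    ∑ a ∈ range m, (a : ℚ) ^ 3 = (m * (m - 1) / 2) ^ 2 := by
  induction m with
  | zero => simp
  | succ m ih => rw [sum_range_succ, ih]; push_cast; ring

theorem sum_range_cast_pow_four (m : ℕ) :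
    ∑ a ∈ range m, (a : ℚ) ^ 4 = m * (m - 1) * (2 * m - 1) * (3 * m ^ 2 - 3 * m - 1) / 30 := by
  induction m with
  | zero => simp
  | succ m ih => rw [sum_range_succ, ih]; push_cast; ring

theorem sum_range_cast_pow_five (m : ℕ) :
    ∑ a ∈ range m, (a : ℚ) ^ 5 = m ^ 2 * (m - 1) ^ 2 * (2 * m ^ 2 - 2 * m - 1) / 12 := by
  induction m with
  | zero => simp
  | succ m ih => rw [sum_range_succ, ih]; push_cast; ring

theorem sum_range_cast_pow_six (m : ℕ) :
    ∑ a ∈ range m, (a : ℚ) ^ 6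
      = m * (m - 1) * (2 * m - 1) * (3 * m ^ 4 - 6 * m ^ 3 + 3 * m + 1) / 42 := by
  induction m with
  | zero => simp
  | succ m ih => rw [sum_range_succ, ih]; push_cast; ring

/-- The constant term is `σ k 0 = 0`. -/
noncomputable def sigmaSeries (k : ℕ) : PowerSeries ℚ := mk fun n => (σ k n : ℚ)

theorem coeff_sigmaSeries_mul (i j n : ℕ) :
    coeff n (sigmaSeries i * sigmaSeries j)
      = ∑ q ∈ mulAddSolutions n, (q.1.1 : ℚ) ^ i * (q.1.2 : ℚ) ^ j := by
  simp only [coeff_mul, sigmaSeries, coeff_mk, cast_sigma_apply]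
  exact (sum_mulAddSolutions_eq_sum_antidiagonal _ _).symm

theorem coeff_sigmaSeries_mul_eq_of_liouville {i j k : ℕ} (hi : i ≠ 0) (c : ℚ)
    (φ : ℚ → ℚ → ℚ)
    (hφ : ∀ a b, φ a b + φ b a - φ (a + b) a - φ a (a + b) = a ^ i * b ^ j + b ^ i * a ^ j)
    (hφ0 : ∀ b, φ 0 b = 0) (hφd : ∀ d, φ d d = c * d ^ (k + 1)) (n : ℕ) :
    coeff n (sigmaSeries i * sigmaSeries j)
      = c * (n * σ k n - σ (k + 1) n)
        + ∑ d ∈ n.divisors, ∑ a ∈ range d, ((a : ℚ) ^ i * (d - a) ^ j - φ a (d - a)) := by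
  rw [coeff_sigmaSeries_mul, sum_mulAddSolutions_liouville (fun a b => φ a b)
    (fun a b => (a : ℚ) ^ i * (b : ℚ) ^ j) (fun a b => by push_cast; exact hφ a b)]
  simp only [sub_add_eq_add_sub, add_sub_assoc, sum_add_distrib, hφd, ← mul_sum,
    sum_divisors_sum_Ioo_pow]
  congr 1
  refine Nat.sum_div_divisors n (fun m => ∑ a ∈ Ioo 0 m, ((a : ℚ) ^ i * ((m - a : ℕ) : ℚ) ^ j
    - φ a ((m - a : ℕ) : ℚ))) |>.trans (sum_congr rfl fun d _ => ?_)
  rw [← sum_subset (fun a ha => mem_range.2 (mem_Ioo.1 ha).2) fun a _ ha => ?_]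
  · exact sum_congr rfl fun a ha => by rw [Nat.cast_sub (mem_Ioo.1 ha).2.le]
  · obtain rfl : a = 0 := by simp_all
    simp [hi, hφ0]

/- Each `φ` below solves the functional equation `hφ` among the polynomials of degree `i + j`
vanishing at `a = 0`: a linear system in the coefficients. -/

theorem sigmaSeries_one_mul_one :
    12 * (sigmaSeries 1 * sigmaSeries 1)
      = 5 * sigmaSeries 3 + sigmaSeries 1 - 6 * Dq (sigmaSeries 1) := by
  ext n
  rw [coeff_ofNat_mul, coeff_sigmaSeries_mul_eq_of_liouville one_ne_zero (-1 / 2)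
    (fun a b => a * b / 2 - a ^ 2) (k := 1) (by intros; ring) (by simp) (by intros; ring)]
  simp only [map_add, map_sub, coeff_ofNat_mul, Dq, sigmaSeries, coeff_mk]
  ring_nf
  simp only [sum_add_distrib, ← sum_mul, sum_range_cast, sum_range_cast_pow_two]
  ring_nf
  simp only [sum_add_distrib, ← sum_mul, ← cast_sigma_apply, ← cast_sigma_one_apply]
  ring

theorem sigmaSeries_one_mul_three :
    240 * (sigmaSeries 1 * sigmaSeries 3)
      = 21 * sigmaSeries 5 + 10 * sigmaSeries 3 - sigmaSeries 1 - 30 * Dq (sigmaSeries 3) := by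
  ext n
  rw [coeff_ofNat_mul, coeff_sigmaSeries_mul_eq_of_liouville one_ne_zero (-1 / 8)
    (fun a b => a * b ^ 3 / 2 - 3 * a ^ 2 * b ^ 2 / 8 - a ^ 4 / 4) (k := 3)
    (by intros; ring) (by simp) (by intros; ring)]
  simp only [map_add, map_sub, coeff_ofNat_mul, Dq, sigmaSeries, coeff_mk]
  ring_nf
  simp only [sum_add_distrib, ← sum_mul, sum_range_cast, sum_range_cast_pow_two,
    sum_range_cast_pow_three, sum_range_cast_pow_four]
  ring_nf
  simp only [sum_add_distrib, ← sum_mul, ← cast_sigma_apply, ← cast_sigma_one_apply]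
  ring

theorem sigmaSeries_one_mul_five :
    504 * (sigmaSeries 1 * sigmaSeries 5)
      = 20 * sigmaSeries 7 + 21 * sigmaSeries 5 + sigmaSeries 1 - 42 * Dq (sigmaSeries 5) := by
  ext n
  rw [coeff_ofNat_mul, coeff_sigmaSeries_mul_eq_of_liouville one_ne_zero (-1 / 12)
    (fun a b => a * b ^ 5 / 2 - 5 * a ^ 2 * b ^ 4 / 12 - a ^ 6 / 6) (k := 5)
    (by intros; ring) (by simp) (by intros; ring)]
  simp only [map_add, map_sub, coeff_ofNat_mul, Dq, sigmaSeries, coeff_mk]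
  ring_nf
  simp only [sum_add_distrib, ← sum_mul, sum_range_cast, sum_range_cast_pow_two,
    sum_range_cast_pow_three, sum_range_cast_pow_four, sum_range_cast_pow_five,
    sum_range_cast_pow_six]
  ring_nf
  simp only [sum_add_distrib, ← sum_mul, ← cast_sigma_apply, ← cast_sigma_one_apply]
  ring

theorem sigmaSeries_three_mul_three :
    120 * (sigmaSeries 3 * sigmaSeries 3) = sigmaSeries 7 - sigmaSeries 3 := by
  ext n
  rw [coeff_ofNat_mul, coeff_sigmaSeries_mul_eq_of_liouville (by norm_num) 0
    (fun a b => a ^ 3 * b ^ 3 / 2 - a ^ 2 * b ^ 4 / 2) (k := 5)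
    (by intros; ring) (by simp) (by intros; ring)]
  simp only [map_sub, sigmaSeries, coeff_mk]
  ring_nf
  simp only [sum_add_distrib, ← sum_mul, sum_range_cast_pow_two, sum_range_cast_pow_three,
    sum_range_cast_pow_four, sum_range_cast_pow_five]
  ring_nf
  simp only [sum_add_distrib, ← sum_mul, ← cast_sigma_apply]
  ring

end DivisorConvolutions

section Ramanujan

theorem Dq_add (f g : PowerSeries ℚ) : Dq (f + g) = Dq f + Dq g := by
  ext n; simp [Dq, mul_add]

theorem Dq_sub (f g : PowerSeries ℚ) : Dq (f - g) = Dq f - Dq g := by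
  ext n; simp [Dq, mul_sub]

theorem Dq_mul (f g : PowerSeries ℚ) : Dq (f * g) = Dq f * g + f * Dq g := by
  ext n
  simp only [Dq, coeff_mk, map_add, coeff_mul, mul_sum, ← sum_add_distrib]
  refine sum_congr rfl fun p hp => ?_
  rw [← HasAntidiagonal.mem_antidiagonal.1 hp, Nat.cast_add]
  ring

theorem Dq_C (r : ℚ) : Dq (C r) = 0 := by
  ext n; cases n <;> simp [Dq, coeff_C]

theorem Dq_zero : Dq 0 = 0 := by
  simpa using Dq_C 0

theorem Dq_one : Dq 1 = 0 := by
  simpa using Dq_C 1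

theorem Dq_ofNat (k : ℕ) [k.AtLeastTwo] : Dq (ofNat(k)) = 0 := by
  rw [← map_ofNat C k, Dq_C]

theorem E2_eq : E2 = 1 - 24 * sigmaSeries 1 := by
  ext n; rcases n with _ | n <;> simp [E2, sigmaSeries, coeff_ofNat_mul, cast_sigma_one_apply]

theorem E4_eq : E4 = 1 + 240 * sigmaSeries 3 := by
  ext n; rcases n with _ | n <;> simp [E4, sigmaSeries, coeff_ofNat_mul, cast_sigma_apply]

theorem E6_eq : E6 = 1 - 504 * sigmaSeries 5 := by
  ext n; rcases n with _ | n <;> simp [E6, sigmaSeries, coeff_ofNat_mul, cast_sigma_apply]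

theorem Dq_E2 : 12 * Dq E2 = E2 ^ 2 - E4 := by
  rw [E2_eq, E4_eq, Dq_sub, Dq_one, Dq_mul, Dq_ofNat]
  linear_combination (-48) * sigmaSeries_one_mul_one

theorem Dq_E4 : 3 * Dq E4 = E2 * E4 - E6 := by
  rw [E2_eq, E4_eq, E6_eq, Dq_add, Dq_one, Dq_mul, Dq_ofNat]
  linear_combination 24 * sigmaSeries_one_mul_three

theorem Dq_E6 : 2 * Dq E6 = E2 * E6 - E4 ^ 2 := by
  rw [E2_eq, E4_eq, E6_eq, Dq_sub, Dq_one, Dq_mul, Dq_ofNat]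
  linear_combination -24 * sigmaSeries_one_mul_five + 480 * sigmaSeries_three_mul_three

end Ramanujan

section KanekoZagier

/- Normal form for scalars: every denominator becomes a power of `C 12⁻¹`, so that `ring` can
treat `C w` and `C 12⁻¹` as independent atoms. -/

theorem C_div_twelve (r : ℚ) : C (r / 12) = C r * C 12⁻¹ := by
  rw [← map_mul, div_eq_mul_inv]

theorem C_div_144 (r : ℚ) : C (r / 144) = C r * C 12⁻¹ ^ 2 := by
  rw [← map_pow, ← map_mul]; congr 1; ring

theorem C_inv_twelve_mul_twelve : C 12⁻¹ * 12 = (1 : PowerSeries ℚ) := by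
  rw [← map_ofNat C 12, ← map_mul]; norm_num

theorem Dq_E2' : Dq E2 = C 12⁻¹ * (E2 ^ 2 - E4) := by
  linear_combination C 12⁻¹ * Dq_E2 - Dq E2 * C_inv_twelve_mul_twelve

theorem Dq_E4' : Dq E4 = C 12⁻¹ * (4 * (E2 * E4 - E6)) := by
  linear_combination 4 * C 12⁻¹ * Dq_E4 - Dq E4 * C_inv_twelve_mul_twelve

theorem Dq_E6' : Dq E6 = C 12⁻¹ * (6 * (E2 * E6 - E4 ^ 2)) := by
  linear_combination 6 * C 12⁻¹ * Dq_E6 - Dq E6 * C_inv_twelve_mul_twelve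

/-- The Kaneko–Zagier operator `L_w`; the paper's `∂_{w-1}²` is `∂_{w+1} ∘ ∂_{w-1}`. -/
noncomputable def kanekoZagierOp (w : ℚ) (f : PowerSeries ℚ) : PowerSeries ℚ :=
  serreD (w + 1) (serreD (w - 1) f) - C ((w ^ 2 - 1) / 144) * E4 * f

theorem serreD_C_mul (k r : ℚ) (f : PowerSeries ℚ) : serreD k (C r * f) = C r * serreD k f := by
  simp only [serreD, Dq_mul, Dq_C]; ring

theorem Kup_C_mul (w r : ℚ) (f : PowerSeries ℚ) : Kup w (C r * f) = C r * Kup w f := by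
  simp only [Kup, serreD_C_mul]; ring

theorem kanekoZagierOp_C_mul (w r : ℚ) (f : PowerSeries ℚ) :
    kanekoZagierOp w (C r * f) = C r * kanekoZagierOp w f := by
  simp only [kanekoZagierOp, serreD_C_mul]; ring

theorem kanekoZagierOp_zero_one : kanekoZagierOp 0 1 = 0 := by
  simp only [kanekoZagierOp, serreD, Dq_sub, Dq_mul, Dq_C, Dq_zero, Dq_one, Dq_E2', C_div_twelve,
    C_div_144, map_add, map_sub, map_pow, map_one, _root_.map_zero]
  ring

theorem kanekoZagierOp_Kup (w : ℚ) (f : PowerSeries ℚ) :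
    kanekoZagierOp (w + 6) (Kup w f)
      = E4 * serreD (w + 3) (kanekoZagierOp w f) - C ((w + 9) / 12) * E6 * kanekoZagierOp w f := by
  simp only [kanekoZagierOp, Kup, serreD, Dq_add, Dq_sub, Dq_mul, Dq_C, Dq_zero, Dq_one, Dq_ofNat,
    Dq_E2', Dq_E4', Dq_E6', C_div_twelve, C_div_144, map_add, map_sub, map_mul, map_one,
    map_ofNat, sq]
  ring

theorem Kup_Kup (w : ℚ) (f : PowerSeries ℚ) :
    Kup (w + 6) (Kup w f)
      = E4 ^ 2 * kanekoZagierOp w f - C ((w + 6) / 6) * E6 * Kup w f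
        + C (12 * (w + 1) * (w + 5)) * Δmf * f := by
  rw [show C ((w + 6) / 6) = C (2 * (w + 6) / 12) by congr 1; ring, Δmf, ← mul_assoc, ← map_mul,
    show 12 * (w + 1) * (w + 5) * (1 / 1728) = (w + 1) * (w + 5) / 144 by ring]
  simp only [kanekoZagierOp, Kup, serreD, Dq_add, Dq_sub, Dq_mul, Dq_C, Dq_one, Dq_E2', Dq_E4',
    Dq_E6', C_div_twelve, C_div_144, map_add, map_sub, map_mul, map_one, map_ofNat, sq]
  ring

theorem kanekoZagierOp_G (n : ℕ) : kanekoZagierOp (6 * n) (G n) = 0 := by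
  induction n with
  | zero => simpa [G] using kanekoZagierOp_zero_one
  | succ n ih =>
    rw [G, Nat.cast_succ, mul_add_one, kanekoZagierOp_C_mul, kanekoZagierOp_Kup, ih]
    simp [serreD, Dq_zero]

end KanekoZagier

theorem G_succ (n : ℕ) {w : ℚ} (hw : 6 * n = w) :
    G (n + 1) = C ((w + 6) / (72 * (w + 1) * (w + 5))) * Kup w (G n) := by
  subst hw; rfl

/-- For `w ≡ 0 (mod 6)`,
`G_{w+12} = -((w+6)(w+12)/(432(w+7)(w+11))) (E₆ G_{w+6} - Δ G_w)`. -/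
theorem G_linear_recursion (n : ℕ) :
    G (n + 2) =
      -(PowerSeries.C (R := ℚ) (((6 * (n : ℚ) + 6) * (6 * (n : ℚ) + 12)) /
          (432 * (6 * (n : ℚ) + 7) * (6 * (n : ℚ) + 11)))) *
        (E6 * G (n + 1) - Δmf * G n) := by
  obtain ⟨w, hw⟩ : ∃ w : ℚ, 6 * n = w := ⟨_, rfl⟩
  have hKK := Kup_Kup w (G n)
  have hL : kanekoZagierOp w (G n) = 0 := hw ▸ kanekoZagierOp_G n
  rw [hL, mul_zero, zero_sub] at hKK
  rw [hw, G_succ (n + 1) (w := w + 6) (by push_cast; linarith), G_succ n hw, Kup_C_mul, hKK]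
  have hw0 : 0 ≤ w := hw ▸ by positivity
  have h1 : C ((w + 6 + 6) / (72 * (w + 6 + 1) * (w + 6 + 5)))
      * C ((w + 6) / (72 * (w + 1) * (w + 5))) * C ((w + 6) / 6)
      = C ((w + 6) * (w + 12) / (432 * (w + 7) * (w + 11)))
        * C ((w + 6) / (72 * (w + 1) * (w + 5))) := by
    simp only [← map_mul]; congr 1; field_simp; ring
  have h2 : C ((w + 6 + 6) / (72 * (w + 6 + 1) * (w + 6 + 5)))
      * C ((w + 6) / (72 * (w + 1) * (w + 5))) * C (12 * (w + 1) * (w + 5))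
      = C ((w + 6) * (w + 12) / (432 * (w + 7) * (w + 11))) := by
    simp only [← map_mul]; congr 1; field_simp; ring
  linear_combination (-(E6 * Kup w (G n))) * h1 + (Δmf * G n) * h2
end

section
/- For n ≥ 1, the following identity of polynomials holds: X·A_{n,6}(X) = A_{n+1,2}(X) + (6(12n-1)(12n+5)/(n(2n+1)))·A_{n,2}(X), where A_{n,2} and A_{n,6} are the Atkin-like polynomials defined by their three-term recursions. -/
open Polynomial

/-- Recursion coefficient `a_{n,2} = 24(144n²-29)/((2n+1)(2n-1))`. -/
noncomputable def a2 (n : ℕ) : ℚ :=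
  24 * (144 * (n : ℚ) ^ 2 - 29) / ((2 * (n : ℚ) + 1) * (2 * (n : ℚ) - 1))

/-- Recursion coefficient `b_{n,2} = 36(12n-13)(12n-7)(12n-5)(12n+1)/(n(n-1)(2n-1)²)`. -/
noncomputable def b2 (n : ℕ) : ℚ :=
  36 * (12 * (n : ℚ) - 13) * (12 * (n : ℚ) - 7) * (12 * (n : ℚ) - 5) * (12 * (n : ℚ) + 1) /
    ((n : ℚ) * ((n : ℚ) - 1) * (2 * (n : ℚ) - 1) ^ 2)

/-- The monic Atkin polynomials `A_{n,2}(X)`, defined by the three-term recursion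
`A_{n+1,2} = (X - a_n)A_{n,2} - b_n A_{n-1,2}` for `n ≥ 2`. -/
noncomputable def A2 : ℕ → Polynomial ℚ
  | 0 => 1
  | 1 => X - C 720
  | 2 => X ^ 2 - C 1640 * X + C 269280
  | n + 3 => (X - C (a2 (n + 2))) * A2 (n + 2) - C (b2 (n + 2)) * A2 (n + 1)

/-- Recursion coefficient `a_{n,6} = a_{n+1/2,0} = 24(144(n+1/2)²-41)/((2n+2)(2n))`. -/
noncomputable def a6 (n : ℕ) : ℚ :=
  24 * (144 * ((n : ℚ) + 1 / 2) ^ 2 - 41) / ((2 * (n : ℚ) + 2) * (2 * (n : ℚ)))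

/-- Recursion coefficient `b_{n,6} = b_{n+1/2,0} = 36(12n-5)(12n-1)(12n+1)(12n+5)·4/((2n+1)(2n-1)(2n)²)`. -/
noncomputable def b6 (n : ℕ) : ℚ :=
  36 * (12 * (n : ℚ) - 5) * (12 * (n : ℚ) - 1) * (12 * (n : ℚ) + 1) * (12 * (n : ℚ) + 5) * 4 /
    ((2 * (n : ℚ) + 1) * (2 * (n : ℚ) - 1) * (2 * (n : ℚ)) ^ 2)

/-- The monic Atkin-like polynomials `A_{n,6}(X)`, defined by the three-term recursion
`A_{n+1,6} = (X - a_{n+1/2,0})A_{n,6} - b_{n+1/2,0} A_{n-1,6}` for `n ≥ 1`. -/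
noncomputable def A6 : ℕ → Polynomial ℚ
  | 0 => 1
  | 1 => X - C 1266
  | n + 2 => (X - C (a6 (n + 1))) * A6 (n + 1) - C (b6 (n + 1)) * A6 n

/-!
Both families satisfy three-term recurrences, so the identity propagates by a two-step induction:
expanding `X · A_{n+2,6}` by its recurrence, substituting the identity at `n` and `n + 1`, and
expanding `A_{n+3,2}`, `A_{n+2,2}` by theirs leaves three rational identities among the
recursion coefficients and `c_n = 6(12n-1)(12n+5)/(n(2n+1))`. The cases `n = 1, 2` are checked
directly.
-/

noncomputable def c26 (n : ℕ) : ℚ :=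
  6 * (12 * (n : ℚ) - 1) * (12 * (n : ℚ) + 5) / ((n : ℚ) * (2 * (n : ℚ) + 1))

-- `ring_nf` turns every denominator into a polynomial in `n` with positive coefficients,
-- whose nonvanishing `field_simp` can then see.
lemma c26_sub_a6 (n : ℕ) : c26 (n + 1) - a6 (n + 1) = c26 (n + 2) - a2 (n + 2) := by
  simp only [c26, a6, a2]
  push_cast
  ring_nf
  field_simp
  ring

lemma c26_mul_a2_sub_a6_sub_b6 (n : ℕ) :
    c26 (n + 1) * (a2 (n + 1) - a6 (n + 1)) - b6 (n + 1) = -b2 (n + 2) := by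
  simp only [c26, a6, a2, b6, b2]
  push_cast
  ring_nf
  field_simp
  ring

lemma c26_mul_b2 (n : ℕ) : c26 (n + 2) * b2 (n + 2) = b6 (n + 2) * c26 (n + 1) := by
  simp only [c26, b6, b2]
  push_cast
  ring_nf
  field_simp
  ring

lemma A2_add_three (n : ℕ) :
    A2 (n + 3) = (X - C (a2 (n + 2))) * A2 (n + 2) - C (b2 (n + 2)) * A2 (n + 1) := by
  rw [A2]

lemma A6_add_two (n : ℕ) :
    A6 (n + 2) = (X - C (a6 (n + 1))) * A6 (n + 1) - C (b6 (n + 1)) * A6 n := by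
  rw [A6]

lemma X_mul_A6_one : X * A6 1 = A2 2 + C (c26 1) * A2 1 := by
  refine Polynomial.funext fun x => ?_
  simp only [A6, A2, c26, eval_add, eval_sub, eval_mul, eval_pow, eval_X, eval_C]
  norm_num
  ring

lemma X_mul_A6_two : X * A6 2 = A2 3 + C (c26 2) * A2 2 := by
  refine Polynomial.funext fun x => ?_
  rw [A6_add_two 0, A2_add_three 0]
  simp only [A6, A2, a2, b2, a6, b6, c26, eval_add, eval_sub, eval_mul, eval_pow, eval_X, eval_C]
  norm_num
  ring

lemma X_mul_A6_add_three (n : ℕ)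
    (h₁ : X * A6 (n + 1) = A2 (n + 2) + C (c26 (n + 1)) * A2 (n + 1))
    (h₂ : X * A6 (n + 2) = A2 (n + 3) + C (c26 (n + 2)) * A2 (n + 2)) :
    X * A6 (n + 3) = A2 (n + 4) + C (c26 (n + 3)) * A2 (n + 3) := by
  have hI₁ := congrArg C (c26_sub_a6 (n + 1))
  have hI₂ := congrArg C (c26_mul_a2_sub_a6_sub_b6 (n + 1))
  have hI₃ := congrArg C (c26_mul_b2 n)
  simp only [map_sub, map_mul, map_neg, add_assoc, Nat.reduceAdd] at hI₁ hI₂ hI₃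
  linear_combination X * A6_add_two (n + 1) + (X - C (a6 (n + 2))) * h₂ - C (b6 (n + 2)) * h₁
    - A2_add_three (n + 1) - C (c26 (n + 2)) * A2_add_three n
    + A2 (n + 3) * hI₁ + A2 (n + 2) * hI₂ + A2 (n + 1) * hI₃

/-- For `n ≥ 1`, `X·A_{n,6}(X) = A_{n+1,2}(X) + (6(12n-1)(12n+5)/(n(2n+1)))·A_{n,2}(X)`. -/
theorem X_mul_A6_eq (n : ℕ) (hn : 1 ≤ n) :
    X * A6 n =
      A2 (n + 1) +
        C (6 * (12 * (n : ℚ) - 1) * (12 * (n : ℚ) + 5) / ((n : ℚ) * (2 * (n : ℚ) + 1))) * A2 n := by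
  obtain ⟨m, rfl⟩ : ∃ m, n = m + 1 := ⟨n - 1, by omega⟩
  clear hn
  induction m using Nat.twoStepInduction with
  | zero => exact X_mul_A6_one
  | one => exact X_mul_A6_two
  | more m h₁ h₂ => exact X_mul_A6_add_three m h₁ h₂
end
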